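/- arXiv:1401.6017 — 4 statements merged into one kernel-verified Lean document; each statement's English description precedes it below -/
import Mathlib

section
/- The function g: (0,∞) → ℝ defined piecewise by g(t) = 0 for 0 < t < 3/π², g(t) = (6/(π²t²))·log(π²t/3) for 3/π² < t < 12/π², and g(t) = (12/(π²t²))·log(2/(1 + √(1 − 12/(π²t)))) for t > 12/π², is a probability density: g ≥ 0 and ∫₀^∞ g(t) dt = 1. -/
open MeasureTheory

/-- The limiting spacing density `g` for the radial projection of the visible
points of the integer lattice: `g t = 0` on `(0, 3/π²]`,
`g t = (6/(π²t²)) * log (π²t/3)` on `(3/π², 12/π²)`, and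
`g t = (12/(π²t²)) * log (2 / (1 + √(1 - 12/(π²t))))` on `[12/π², ∞)`. -/
noncomputable def g (t : ℝ) : ℝ :=
  if t ≤ 3 / Real.pi ^ 2 then 0
  else if t < 12 / Real.pi ^ 2 then
    6 / (Real.pi ^ 2 * t ^ 2) * Real.log (Real.pi ^ 2 * t / 3)
  else
    12 / (Real.pi ^ 2 * t ^ 2) *
      Real.log (2 / (1 + Real.sqrt (1 - 12 / (Real.pi ^ 2 * t))))

/-!
Both nonzero pieces of `g` have elementary primitives. With `a = 3/π²`, the middle piece is
`(6/π²) · log (t/a) / t²`, the derivative of `-(6/π²) (log (t/a) + 1) / t`; over `(a, 4a)` it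
contributes `3/2 - log 2`. With `b = 12/π²` and `v = √(1 - b/t)`, so that `dv/dt = (b/t²) / (2v)`,
the tail is `(b/t²) log (2/(1+v)) = (2v log (2/(1+v))) dv/dt`, and `2v log (2/(1+v))` is the
derivative of `tailPotential`. As `t` runs over `(b, ∞)`, `v` runs over `(0, 1)`, so the tail
contributes `tailPotential 1 - tailPotential 0 = log 2 - 1/2`.
-/

open Real Set Filter Topology

namespace SpacingDensity

noncomputable def tailPotential (v : ℝ) : ℝ :=
  v ^ 2 * log (2 / (1 + v)) + v ^ 2 / 2 - v + log (1 + v)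

theorem hasDerivAt_tailPotential {v : ℝ} (hv : -1 < v) :
    HasDerivAt tailPotential (2 * v * log (2 / (1 + v))) v := by
  have h1v : 0 < 1 + v := by linarith
  have hden : HasDerivAt (fun w => 1 + w) 1 v := (hasDerivAt_id v).const_add 1
  have hsq : HasDerivAt (fun w => w ^ 2) (2 * v) v := by simpa using hasDerivAt_pow 2 v
  have hquot := (hasDerivAt_const v (2 : ℝ)).fun_div hden h1v.ne'
  refine ((hsq.fun_mul (hquot.log (div_pos two_pos h1v).ne')).fun_add (hsq.div_const 2)
    |>.fun_sub (hasDerivAt_id' v)).fun_add (hden.log h1v.ne') |>.congr_deriv ?_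
  field_simp
  ring

noncomputable def tailDensity (a s : ℝ) : ℝ :=
  a / s ^ 2 * log (2 / (1 + √(1 - a / s)))

theorem one_le_two_div_one_add_sqrt_one_sub {x : ℝ} (hx : 0 ≤ x) :
    1 ≤ 2 / (1 + √(1 - x)) := by
  have : √(1 - x) ≤ 1 := sqrt_le_one.mpr (by linarith)
  rw [le_div_iff₀ (by positivity)]
  linarith

theorem tailDensity_nonneg {a s : ℝ} (ha : 0 ≤ a) (hs : 0 ≤ s) : 0 ≤ tailDensity a s :=
  mul_nonneg (by positivity) (log_nonneg (one_le_two_div_one_add_sqrt_one_sub (by positivity)))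

theorem hasDerivAt_tailPotential_sqrt {a s : ℝ} (ha : 0 < a) (hs : a < s) :
    HasDerivAt (fun x => tailPotential √(1 - a / x)) (tailDensity a s) s := by
  have hs0 : s ≠ 0 := (ha.trans hs).ne'
  have hpos : 0 < 1 - a / s := by rw [sub_pos, div_lt_one (ha.trans hs)]; exact hs
  have hinner : HasDerivAt (fun x => 1 - a / x) (a / s ^ 2) s :=
    ((hasDerivAt_const s a).fun_div (hasDerivAt_id' s) hs0).const_sub 1 |>.congr_deriv
      (by field_simp; ring)
  have hv : 0 < √(1 - a / s) := sqrt_pos.mpr hpos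
  refine (hasDerivAt_tailPotential (by linarith)).comp s (hinner.sqrt hpos.ne') |>.congr_deriv ?_
  rw [tailDensity]
  generalize √(1 - a / s) = v at hv ⊢
  field_simp

theorem continuousAt_tailPotential_sqrt {a : ℝ} (ha : a ≠ 0) :
    ContinuousAt (fun x => tailPotential √(1 - a / x)) a :=
  (hasDerivAt_tailPotential (v := 0) (by norm_num)).continuousAt.comp_of_eq
    (by fun_prop (disch := exact ha)) (by simp [ha])

theorem tendsto_tailPotential_sqrt_atTop (a : ℝ) :
    Tendsto (fun x => tailPotential √(1 - a / x)) atTop (𝓝 (log 2 - 1 / 2)) := by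
  have hlim : Tendsto (fun x => √(1 - a / x)) atTop (𝓝 1) := by
    simpa using ((tendsto_const_nhds.div_atTop tendsto_id).const_sub 1).sqrt
  have h1 : tailPotential 1 = log 2 - 1 / 2 := by
    rw [tailPotential, one_add_one_eq_two, div_self two_ne_zero, log_one]
    ring
  exact h1 ▸ (hasDerivAt_tailPotential (by norm_num)).continuousAt.tendsto.comp hlim

theorem integrableOn_tailDensity {a : ℝ} (ha : 0 < a) : IntegrableOn (tailDensity a) (Ioi a) :=
  integrableOn_Ioi_deriv_of_nonneg (continuousAt_tailPotential_sqrt ha.ne').continuousWithinAt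
    (fun _ hs => hasDerivAt_tailPotential_sqrt ha hs)
    (fun _ hs => tailDensity_nonneg ha.le (ha.trans hs).le) (tendsto_tailPotential_sqrt_atTop a)

theorem integral_tailDensity {a : ℝ} (ha : 0 < a) :
    ∫ s in Ioi a, tailDensity a s = log 2 - 1 / 2 := by
  rw [integral_Ioi_of_hasDerivAt_of_nonneg
    (continuousAt_tailPotential_sqrt ha.ne').continuousWithinAt
    (fun _ hs => hasDerivAt_tailPotential_sqrt ha hs)
    (fun _ hs => tailDensity_nonneg ha.le (ha.trans hs).le) (tendsto_tailPotential_sqrt_atTop a)]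
  simp [ha.ne', tailPotential]

theorem continuousOn_log_div_div_sq {a : ℝ} (ha : a ≠ 0) :
    ContinuousOn (fun x => log (x / a) / x ^ 2) (Ioi 0) := fun x (hx : 0 < x) =>
  (((continuousAt_id.div_const a).log (div_ne_zero hx.ne' ha)).div
    (continuousAt_id.pow 2) (pow_pos hx 2).ne').continuousWithinAt

theorem hasDerivAt_neg_log_div_add_one_div {a s : ℝ} (ha : a ≠ 0) (hs : s ≠ 0) :
    HasDerivAt (fun x => -(log (x / a) + 1) / x) (log (s / a) / s ^ 2) s := by
  have hlog : HasDerivAt (fun x => log (x / a)) (1 / a / (s / a)) s :=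
    ((hasDerivAt_id' s).div_const a).log (div_ne_zero hs ha)
  refine (hlog.add_const 1).neg.fun_div (hasDerivAt_id' s) hs |>.congr_deriv ?_
  simp only [Pi.neg_apply]
  field_simp
  ring

theorem integral_log_div_div_sq {a b : ℝ} (ha : 0 < a) (hab : a ≤ b) :
    ∫ x in a..b, log (x / a) / x ^ 2 = 1 / a - (log (b / a) + 1) / b := by
  have hpos : uIcc a b ⊆ Ioi 0 := fun x hx => ha.trans_le (uIcc_of_le hab ▸ hx).1
  rw [intervalIntegral.integral_eq_sub_of_hasDerivAt
    (fun x hx => hasDerivAt_neg_log_div_add_one_div ha.ne' (hpos hx).ne')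
    ((continuousOn_log_div_div_sq ha.ne').mono hpos).intervalIntegrable]
  simp only [neg_add_rev, ha.ne', div_self, ne_eq, not_false_eq_true, log_one, zero_add, one_div]
  ring

end SpacingDensity

open SpacingDensity

theorem three_div_pi_sq_lt_twelve_div_pi_sq : 3 / π ^ 2 < 12 / π ^ 2 := by
  gcongr
  norm_num

theorem g_eq_zero_of_le {t : ℝ} (ht : t ≤ 3 / π ^ 2) : g t = 0 := by
  simp [g, ht]

theorem g_eq_of_mem_Ioo {t : ℝ} (ht : t ∈ Ioo (3 / π ^ 2) (12 / π ^ 2)) :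
    g t = 6 / π ^ 2 * (log (t / (3 / π ^ 2)) / t ^ 2) := by
  rw [g, if_neg (not_le.mpr ht.1), if_pos ht.2, div_div_eq_mul_div, mul_comm t]
  ring

theorem g_eq_tailDensity {t : ℝ} (ht : 12 / π ^ 2 ≤ t) : g t = tailDensity (12 / π ^ 2) t := by
  have h3 : ¬t ≤ 3 / π ^ 2 := (three_div_pi_sq_lt_twelve_div_pi_sq.trans_le ht).not_ge
  rw [g, if_neg h3, if_neg (not_lt.mpr ht), tailDensity, div_div, div_div]

theorem g_nonneg (t : ℝ) : 0 ≤ g t := by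
  rcases le_or_gt t (3 / π ^ 2) with h3 | h3
  · exact (g_eq_zero_of_le h3).ge
  have ht : 0 < t := lt_trans (by positivity) h3
  rcases lt_or_ge t (12 / π ^ 2) with h12 | h12
  · rw [g_eq_of_mem_Ioo ⟨h3, h12⟩]
    have : 1 ≤ t / (3 / π ^ 2) := (one_le_div (by positivity)).mpr h3.le
    exact mul_nonneg (by positivity) (div_nonneg (log_nonneg this) (by positivity))
  · rw [g_eq_tailDensity h12]
    exact tailDensity_nonneg (by positivity) ht.le

theorem integrableOn_g_Ioc : IntegrableOn g (Ioc (3 / π ^ 2) (12 / π ^ 2)) := by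
  rw [integrableOn_Ioc_iff_integrableOn_Ioo]
  refine IntegrableOn.congr_fun ?_ (fun t ht => (g_eq_of_mem_Ioo ht).symm) measurableSet_Ioo
  have hsub : Icc (3 / π ^ 2) (12 / π ^ 2) ⊆ Ioi 0 := fun _ ht =>
    lt_of_lt_of_le (by positivity) ht.1
  exact (((continuousOn_log_div_div_sq (by positivity)).mono hsub).integrableOn_Icc.mono_set
    Ioo_subset_Icc_self).const_mul _

theorem integral_g_Ioc : ∫ t in Ioc (3 / π ^ 2) (12 / π ^ 2), g t = 3 / 2 - log 2 := by
  have hab := three_div_pi_sq_lt_twelve_div_pi_sq.le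
  -- `g` already follows the tail formula at `12/π²`, so pass through the open interval
  rw [integral_Ioc_eq_integral_Ioo, setIntegral_congr_fun measurableSet_Ioo
      fun t ht => g_eq_of_mem_Ioo ht, ← integral_Ioc_eq_integral_Ioo,
    ← intervalIntegral.integral_of_le hab, intervalIntegral.integral_const_mul,
    integral_log_div_div_sq (by positivity) hab]
  have h4 : 12 / π ^ 2 / (3 / π ^ 2) = 2 ^ 2 := by field_simp; norm_num
  rw [h4, log_pow]
  field_simp
  ring

theorem integrableOn_g_Ioi : IntegrableOn g (Ioi (12 / π ^ 2)) :=
  (integrableOn_tailDensity (by positivity)).congr_fun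
    (fun _ ht => (g_eq_tailDensity (le_of_lt ht)).symm) measurableSet_Ioi

theorem integral_g_Ioi : ∫ t in Ioi (12 / π ^ 2), g t = log 2 - 1 / 2 := by
  rw [setIntegral_congr_fun measurableSet_Ioi fun _ ht => g_eq_tailDensity (le_of_lt ht),
    integral_tailDensity (by positivity)]

/-- `g` is a probability density: it is nonnegative and integrates to 1. -/
theorem g_is_probability_density :
    (∀ t : ℝ, 0 ≤ g t) ∧ ∫ t in Set.Ioi (0 : ℝ), g t = 1 := by
  refine ⟨g_nonneg, ?_⟩
  rw [setIntegral_eq_of_subset_of_forall_sdiff_eq_zero measurableSet_Ioi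
      (Ioi_subset_Ioi (by positivity)) fun t ht => g_eq_zero_of_le (not_lt.mp ht.2),
    ← Ioc_union_Ioi_eq_Ioi three_div_pi_sq_lt_twelve_div_pi_sq.le,
    setIntegral_union Ioc_disjoint_Ioi_same measurableSet_Ioi integrableOn_g_Ioc integrableOn_g_Ioi,
    integral_g_Ioc, integral_g_Ioi]
  ring
end

section
/- The tail of the density g decays like an inverse cube: lim_{t → ∞} t³·g(t) = 36/π⁴. -/
/-! For `t ≥ c := 12/π²`, `t³ g(t) = c · t · f(c/t)` with `f u = log (2 / (1 + √(1 - u)))`.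
As `f 0 = 0`, `t · f(c/t) = c · (f(c/t) - f 0) / (c/t)` is `c` times a difference quotient of `f`
at `0`, so it tends to `c · f'(0) = c/4`, and the limit is `c²/4 = 36/π⁴`. -/

open Filter

open Topology

theorem HasDerivAt.tendsto_mul_comp_const_div_atTop {f : ℝ → ℝ} {f' c : ℝ}
    (hf : HasDerivAt f f' 0) (hf0 : f 0 = 0) (hc : 0 < c) :
    Tendsto (fun t => t * f (c / t)) atTop (𝓝 (c * f')) := by
  have hinv : Tendsto (fun t : ℝ => c / t) atTop (𝓝[≠] 0) :=
    tendsto_nhdsWithin_of_tendsto_nhds_of_eventually_within _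
      (tendsto_const_nhds.div_atTop tendsto_id)
      (by filter_upwards [eventually_gt_atTop 0] with t ht using (div_pos hc ht).ne')
  refine ((hasDerivAt_iff_tendsto_slope.mp hf).comp hinv |>.const_mul c).congr' ?_
  filter_upwards [eventually_gt_atTop 0] with t ht
  simp only [Function.comp_apply, slope_def_field, hf0, sub_zero]
  field_simp

theorem hasDerivAt_log_two_div_one_add_sqrt_one_sub :
    HasDerivAt (fun u : ℝ => Real.log (2 / (1 + √(1 - u)))) (1 / 4) 0 := by
  have hsqrt : HasDerivAt (fun u : ℝ => 1 + √(1 - u)) (-(1 / 2)) 0 :=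
    ((((hasDerivAt_id (0 : ℝ)).const_sub 1).sqrt (by norm_num)).const_add 1).congr_deriv
      (by norm_num)
  have hlog : HasDerivAt (fun u : ℝ => Real.log 2 - Real.log (1 + √(1 - u))) (1 / 4) 0 :=
    ((hsqrt.log (by norm_num)).const_sub (Real.log 2)).congr_deriv (by norm_num)
  refine hlog.congr_of_eventuallyEq (Eventually.of_forall fun u => ?_)
  exact Real.log_div two_ne_zero (by positivity)

theorem g_of_le {t : ℝ} (ht : 12 / Real.pi ^ 2 ≤ t) :
    g t = 12 / (Real.pi ^ 2 * t ^ 2) *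
      Real.log (2 / (1 + √(1 - 12 / (Real.pi ^ 2 * t)))) := by
  have h3 : 3 / Real.pi ^ 2 < t :=
    lt_of_lt_of_le (div_lt_div_of_pos_right (by norm_num) (by positivity)) ht
  rw [g, if_neg h3.not_ge, if_neg ht.not_gt]

theorem cube_mul_g_eventuallyEq :
    (fun t : ℝ => t ^ 3 * g t) =ᶠ[atTop] fun t =>
      12 / Real.pi ^ 2 * (t * Real.log (2 / (1 + √(1 - 12 / Real.pi ^ 2 / t)))) := by
  filter_upwards [eventually_ge_atTop (12 / Real.pi ^ 2), eventually_gt_atTop 0] with t ht ht0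
  rw [g_of_le ht, div_div]
  field_simp

/-- The tail of `g` decays like an inverse cube: `t³ * g t → 36/π⁴` as `t → ∞`. -/
theorem g_tail_decay :
    Tendsto (fun t : ℝ => t ^ 3 * g t) atTop (nhds (36 / Real.pi ^ 4)) := by
  have hf0 : Real.log (2 / (1 + √(1 - 0))) = 0 := by norm_num
  have hlim := (hasDerivAt_log_two_div_one_add_sqrt_one_sub.tendsto_mul_comp_const_div_atTop hf0
    (by positivity : (0 : ℝ) < 12 / Real.pi ^ 2)).const_mul (12 / Real.pi ^ 2)
  convert hlim.congr' cube_mul_g_eventuallyEq.symm using 2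
  field_simp
  norm_num
end

section
/- For every integer k ≥ 2, the k-th moment of the density g does not exist: ∫₀^∞ t^k·g(t) dt = ∞. -/
open MeasureTheory

/-!
On the last piece `t ≥ 12/π²` the logarithm is at least `3/(π²t)`, so `t² g(t) ≥ 36/(π⁴t)`.
Hence for `k ≥ 2` the integrand `t^k g(t)` dominates a multiple of `1/t` near infinity, whose
integral diverges.
-/

open Real Set

/-- With `u = √(1 - x)`, `log (2/(1+u)) ≥ 1 - (1+u)/2` and `(1-u)/2 - (1-u²)/4 = (1-u)²/4 ≥ 0`. -/
lemma div_four_le_log_two_div_one_add_sqrt {x : ℝ} (hx : x ≤ 1) :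
    x / 4 ≤ log (2 / (1 + √(1 - x))) := by
  set u := √(1 - x)
  have hu_nonneg : 0 ≤ u := sqrt_nonneg _
  have hu_sq : u ^ 2 = 1 - x := sq_sqrt (by linarith)
  have hlog : log ((1 + u) / 2) ≤ (1 + u) / 2 - 1 := log_le_sub_one_of_pos (by linarith)
  have hinv : log (2 / (1 + u)) = -log ((1 + u) / 2) := by
    rw [← log_inv, inv_div]
  nlinarith [sq_nonneg (1 - u)]

lemma lintegral_Ioi_ofReal_inv_eq_top {a : ℝ} (ha : 0 ≤ a) :
    ∫⁻ t in Ioi a, ENNReal.ofReal t⁻¹ = ⊤ := by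
  by_contra h
  refine not_integrableOn_Ioi_inv (a := a) ⟨measurable_inv.aestronglyMeasurable, ?_⟩
  refine (hasFiniteIntegral_iff_ofReal ?_).2 (lt_top_iff_ne_top.2 h)
  filter_upwards [ae_restrict_mem measurableSet_Ioi] with t ht
  exact inv_nonneg.2 (ha.trans ht.le)

lemma lintegral_Ioi_ofReal_div_eq_top {a c : ℝ} (ha : 0 ≤ a) (hc : 0 < c) :
    ∫⁻ t in Ioi a, ENNReal.ofReal (c / t) = ⊤ := by
  simp_rw [div_eq_mul_inv, ENNReal.ofReal_mul hc.le]
  rw [lintegral_const_mul _ measurable_inv.ennreal_ofReal, lintegral_Ioi_ofReal_inv_eq_top ha]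
  exact ENNReal.mul_top (ENNReal.ofReal_pos.2 hc).ne'

lemma one_lt_twelve_div_pi_sq : 1 < 12 / π ^ 2 := by
  rw [one_lt_div (by positivity)]
  nlinarith [pi_pos, pi_lt_d2]

lemma g_of_twelve_div_pi_sq_le {t : ℝ} (ht : 12 / π ^ 2 ≤ t) :
    g t = 12 / (π ^ 2 * t ^ 2) * log (2 / (1 + √(1 - 12 / (π ^ 2 * t)))) := by
  have h3 : 3 / π ^ 2 < 12 / π ^ 2 := by gcongr; norm_num
  rw [g, if_neg (by linarith), if_neg (not_lt.2 ht)]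

lemma div_le_sq_mul_g {t : ℝ} (ht : 12 / π ^ 2 ≤ t) : 36 / π ^ 4 / t ≤ t ^ 2 * g t := by
  have ht0 : 0 < t := one_pos.trans (one_lt_twelve_div_pi_sq.trans_le ht)
  have hx : 12 / (π ^ 2 * t) ≤ 1 := by
    rw [div_le_one (by positivity), ← div_le_iff₀' (by positivity)]
    exact ht
  calc 36 / π ^ 4 / t = 12 / π ^ 2 * (12 / (π ^ 2 * t) / 4) := by field_simp; ring
    _ ≤ 12 / π ^ 2 * log (2 / (1 + √(1 - 12 / (π ^ 2 * t)))) := by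
      gcongr; exact div_four_le_log_two_div_one_add_sqrt hx
    _ = t ^ 2 * g t := by rw [g_of_twelve_div_pi_sq_le ht]; field_simp

lemma div_le_pow_mul_g {k : ℕ} (hk : 2 ≤ k) {t : ℝ} (ht : 12 / π ^ 2 ≤ t) :
    36 / π ^ 4 / t ≤ t ^ k * g t := by
  have ht1 : 1 ≤ t := one_lt_twelve_div_pi_sq.le.trans ht
  have hbound := div_le_sq_mul_g ht
  have hg : 0 ≤ g t :=
    nonneg_of_mul_nonneg_right (hbound.trans' (by positivity)) (by positivity)
  exact hbound.trans (mul_le_mul_of_nonneg_right (pow_le_pow_right₀ ht1 hk) hg)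

/-- For every integer `k ≥ 2` the `k`-th moment of `g` does not exist
(the integral is infinite). -/
theorem g_moments_infinite (k : ℕ) (hk : 2 ≤ k) :
    ∫⁻ t in Set.Ioi (0 : ℝ), ENNReal.ofReal (t ^ k * g t) = ⊤ := by
  refine top_le_iff.1 ?_
  calc ⊤ = ∫⁻ t in Ioi (12 / π ^ 2), ENNReal.ofReal (36 / π ^ 4 / t) :=
        (lintegral_Ioi_ofReal_div_eq_top (by positivity) (by positivity)).symm
    _ ≤ ∫⁻ t in Ioi (12 / π ^ 2), ENNReal.ofReal (t ^ k * g t) :=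
        setLIntegral_mono' measurableSet_Ioi fun t ht ↦
          ENNReal.ofReal_le_ofReal (div_le_pow_mul_g hk (le_of_lt ht))
    _ ≤ ∫⁻ t in Ioi 0, ENNReal.ofReal (t ^ k * g t) :=
        lintegral_mono_set (Ioi_subset_Ioi (by positivity))
end

section
/- The polynomial X⁴ − 5X² + 5 is irreducible over ℚ, and both of its positive real roots, √((5 + √5)/2) and √((5 − √5)/2), are strictly greater than 1. Consequently the Lançon–Billard inflation multiplier λ = √((5 + √5)/2) is an algebraic integer of degree 4 over ℚ that is not a Pisot number: it has an algebraic conjugate other than itself of absolute value greater than 1. -/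
open Polynomial

/-!
X⁴ − 5X² + 5 is Eisenstein at 5, hence irreducible over ℤ and, by Gauss's lemma, over ℚ; so it is
the minimal polynomial of λ. Its roots are the ±√t with t² − 5t + 5 = 0, i.e. t = (5 ± √5)/2, and
both values of t exceed 1. Since the polynomial is even, −λ is a conjugate of λ with |−λ| = λ > 1.
-/

noncomputable def biquadratic {R : Type*} [CommRing R] (a b : R) : R[X] :=
  X ^ 4 - C a * X ^ 2 + C b

section Biquadratic

variable {R A : Type*} [CommRing R] [CommRing A] [Algebra R A]

theorem aeval_biquadratic (a b : R) (x : A) :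
    aeval x (biquadratic a b) = x ^ 4 - algebraMap R A a * x ^ 2 + algebraMap R A b := by
  simp [biquadratic]

theorem aeval_neg_biquadratic (a b : R) (x : A) :
    aeval (-x) (biquadratic a b) = aeval x (biquadratic a b) := by
  simp only [aeval_biquadratic, Even.neg_pow (by decide : Even 4), Even.neg_pow even_two]

theorem aeval_biquadratic_eq_zero {a b : R} {x t : A}
    (hx : x ^ 2 = t) (ht : t ^ 2 - algebraMap R A a * t + algebraMap R A b = 0) :
    aeval x (biquadratic a b) = 0 := by
  rw [aeval_biquadratic, ← ht, ← hx]
  ring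

theorem map_biquadratic {S : Type*} [CommRing S] (f : R →+* S) (a b : R) :
    (biquadratic a b).map f = biquadratic (f a) (f b) := by
  simp [biquadratic]

theorem monic_biquadratic (a b : R) : (biquadratic a b).Monic := by
  unfold biquadratic; monicity!

theorem natDegree_biquadratic [Nontrivial R] (a b : R) : (biquadratic a b).natDegree = 4 := by
  unfold biquadratic; compute_degree!

theorem irreducible_biquadratic_of_eisenstein [IsDomain R] {P : Ideal R} (hP : P.IsPrime) {a b : R}
    (ha : a ∈ P) (hb : b ∈ P) (hb2 : b ∉ P ^ 2) : Irreducible (biquadratic a b) := by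
  have hmonic := monic_biquadratic a b
  refine irreducible_of_eisenstein_criterion hP ?_ ?_ ?_ ?_ hmonic.isPrimitive
  · rw [hmonic.leadingCoeff]; exact hP.one_notMem
  · intro n hn
    rw [degree_eq_natDegree hmonic.ne_zero, natDegree_biquadratic, Nat.cast_lt] at hn
    interval_cases n <;> simp [biquadratic, coeff_X_pow, ha, hb, P.zero_mem]
  · rw [degree_eq_natDegree hmonic.ne_zero, natDegree_biquadratic]; norm_num
  · simpa [biquadratic] using hb2

end Biquadratic

theorem irreducible_map_biquadratic_of_eisenstein {R K : Type*} [CommRing R] [IsDomain R]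
    [IsIntegrallyClosed R] [Field K] [Algebra R K] [IsFractionRing R K] {P : Ideal R}
    (hP : P.IsPrime) {a b : R} (ha : a ∈ P) (hb : b ∈ P) (hb2 : b ∉ P ^ 2) :
    Irreducible (biquadratic (algebraMap R K a) (algebraMap R K b)) := by
  rw [← map_biquadratic]
  exact (monic_biquadratic a b).irreducible_iff_irreducible_map_fraction_map.mp
    (irreducible_biquadratic_of_eisenstein hP ha hb hb2)

theorem irreducible_biquadratic_five : Irreducible (biquadratic (5 : ℚ) 5) := by
  have hP : (Ideal.span {(5 : ℤ)}).IsPrime :=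
    (Ideal.span_singleton_prime (by norm_num)).mpr (by norm_num)
  have h5 : (5 : ℤ) ∈ Ideal.span {5} := Ideal.mem_span_singleton_self 5
  have h25 : (5 : ℤ) ∉ Ideal.span {5} ^ 2 := by
    rw [Ideal.span_singleton_pow, Ideal.mem_span_singleton]; norm_num
  simpa using irreducible_map_biquadratic_of_eisenstein (K := ℚ) hP h5 h5 h25

theorem aeval_sqrt_biquadratic_five {R : Type*} [CommRing R] [Algebra R ℝ] {t : ℝ}
    (ht0 : 0 ≤ t) (ht : t ^ 2 - 5 * t + 5 = 0) : aeval √t (biquadratic (5 : R) 5) = 0 :=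
  aeval_biquadratic_eq_zero (Real.sq_sqrt ht0) (by rwa [map_ofNat])

theorem exists_conjugate_one_lt_norm_of_minpoly_eq_biquadratic {x : ℝ} {a b : ℚ}
    (hx : minpoly ℚ x = biquadratic a b) (h1 : 1 < x) :
    ∃ z : ℂ, z ≠ (x : ℂ) ∧ aeval z (minpoly ℚ x) = 0 ∧ 1 < ‖z‖ := by
  refine ⟨-(x : ℂ), ?_, ?_, ?_⟩
  · rw [← Complex.ofReal_neg, Ne, Complex.ofReal_inj]
    linarith
  · rw [hx, aeval_neg_biquadratic, ← Complex.coe_algebraMap, aeval_algebraMap_apply, ← hx,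
      minpoly.aeval, map_zero]
  · rwa [norm_neg, Complex.norm_real, Real.norm_of_nonneg (by positivity)]

theorem sqrt_five_lt_three : √5 < 3 := by
  rw [Real.sqrt_lt' (by norm_num)]; norm_num

/-- The polynomial X⁴ − 5X² + 5 is irreducible over ℚ and has the two positive
real roots √((5+√5)/2) and √((5−√5)/2), both strictly greater than 1.
Consequently the Lançon–Billard inflation multiplier λ = √((5+√5)/2) is an
algebraic integer of degree 4 over ℚ that is not a Pisot number: it has an
algebraic conjugate other than itself of absolute value greater than 1. -/
theorem lancon_billard_multiplier_not_pisot :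
    Irreducible ((X ^ 4 - C 5 * X ^ 2 + C 5 : ℚ[X])) ∧
    aeval (Real.sqrt ((5 + Real.sqrt 5) / 2)) (X ^ 4 - C 5 * X ^ 2 + C 5 : ℚ[X]) = 0 ∧
    aeval (Real.sqrt ((5 - Real.sqrt 5) / 2)) (X ^ 4 - C 5 * X ^ 2 + C 5 : ℚ[X]) = 0 ∧
    1 < Real.sqrt ((5 + Real.sqrt 5) / 2) ∧
    1 < Real.sqrt ((5 - Real.sqrt 5) / 2) ∧
    IsIntegral ℤ (Real.sqrt ((5 + Real.sqrt 5) / 2)) ∧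
    (minpoly ℚ (Real.sqrt ((5 + Real.sqrt 5) / 2))).natDegree = 4 ∧
    ∃ z : ℂ, z ≠ ((Real.sqrt ((5 + Real.sqrt 5) / 2) : ℝ) : ℂ) ∧
      aeval z (minpoly ℚ (Real.sqrt ((5 + Real.sqrt 5) / 2))) = 0 ∧
      1 < ‖z‖ := by
  change Irreducible (biquadratic (5 : ℚ) 5) ∧ aeval _ (biquadratic (5 : ℚ) 5) = 0 ∧
    aeval _ (biquadratic (5 : ℚ) 5) = 0 ∧ _
  have h5 : √5 ^ 2 = 5 := Real.sq_sqrt (by norm_num)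
  have hplus : ((5 + √5) / 2) ^ 2 - 5 * ((5 + √5) / 2) + 5 = 0 := by linear_combination h5 / 4
  have hminus : ((5 - √5) / 2) ^ 2 - 5 * ((5 - √5) / 2) + 5 = 0 := by linear_combination h5 / 4
  have hminus_nonneg : 0 ≤ (5 - √5) / 2 := by linarith [sqrt_five_lt_three]
  have hplus_gt : 1 < √((5 + √5) / 2) := Real.lt_sqrt_of_sq_lt (by linarith [Real.sqrt_nonneg 5])
  have hminus_gt : 1 < √((5 - √5) / 2) := Real.lt_sqrt_of_sq_lt (by linarith [sqrt_five_lt_three])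
  have hroot : aeval √((5 + √5) / 2) (biquadratic (5 : ℚ) 5) = 0 :=
    aeval_sqrt_biquadratic_five (by positivity) hplus
  have hintegral : IsIntegral ℤ √((5 + √5) / 2) :=
    ⟨biquadratic 5 5, monic_biquadratic _ _, aeval_sqrt_biquadratic_five (by positivity) hplus⟩
  have hminpoly : minpoly ℚ √((5 + √5) / 2) = biquadratic 5 5 :=
    (minpoly.eq_of_irreducible_of_monic irreducible_biquadratic_five hroot
      (monic_biquadratic _ _)).symm
  exact ⟨irreducible_biquadratic_five, hroot, aeval_sqrt_biquadratic_five hminus_nonneg hminus,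
    hplus_gt, hminus_gt, hintegral, hminpoly ▸ natDegree_biquadratic _ _,
    exists_conjugate_one_lt_norm_of_minpoly_eq_biquadratic hminpoly hplus_gt⟩
end
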